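/- arXiv:1105.3521 — 2 statements merged into one kernel-verified Lean document; each statement's English description precedes it below -/
import Mathlib

section
/- Let C be a Hom-finite, Krull–Schmidt, k-linear triangulated category, (X,W) a cotorsion pair in C with core I = X ∩ W, and D ⊆ I a subcategory satisfying condition (RF). Then the core of the cotorsion pair (μ⁻¹(X;D), μ⁻¹(W;D)) equals μ⁻¹(I;D), and (I, μ⁻¹(I;D)) is a D-mutation pair. -/
open CategoryTheory CategoryTheory.Limits CategoryTheory.Pretriangulated

variable {C : Type*} [Category C] [Preadditive C] [HasZeroObject C]
  [HasShift C ℤ] [∀ n : ℤ, (shiftFunctor C n).Additive] [Pretriangulated C]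

/-- `Hom(𝒳, 𝒴) = 0`. -/
def homZero (𝒳 𝒴 : Set C) : Prop :=
  ∀ ⦃A B : C⦄, A ∈ 𝒳 → B ∈ 𝒴 → ∀ f : A ⟶ B, f = 0

/-- The shift `𝒳[n]` of a subcategory (closed under isomorphisms). -/
def shiftSet (𝒳 : Set C) (n : ℤ) : Set C :=
  {Z | ∃ A ∈ 𝒳, Nonempty ((A⟦n⟧) ≅ Z)}

/-- The class `𝒳 * 𝒴` of extensions. -/
def extClass (𝒳 𝒴 : Set C) : Set C :=
  {Z | ∃ (A B : C) (f : A ⟶ Z) (g : Z ⟶ B) (h : B ⟶ A⟦(1:ℤ)⟧),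
      A ∈ 𝒳 ∧ B ∈ 𝒴 ∧ Triangle.mk f g h ∈ distTriang C}

/-- A torsion pair: `Hom(𝒳,𝒴) = 0` and `C = 𝒳 * 𝒴`. -/
def IsTorsionPair (𝒳 𝒴 : Set C) : Prop :=
  homZero 𝒳 𝒴 ∧ ∀ Z : C, Z ∈ extClass 𝒳 𝒴

/-- A cotorsion pair: `Hom(𝒳,𝒲[1]) = 0` and `C = 𝒳 * 𝒲[1]`. -/
def IsCotorsionPair (𝒳 𝒲 : Set C) : Prop :=
  IsTorsionPair 𝒳 (shiftSet 𝒲 (1:ℤ))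

/-- Full subcategory closed under isomorphisms, finite direct sums and direct summands. -/
structure IsSubcat (𝒳 : Set C) : Prop where
  mem_of_iso : ∀ ⦃A B : C⦄, (A ≅ B) → A ∈ 𝒳 → B ∈ 𝒳
  biprod_mem : ∀ ⦃A B : C⦄, A ∈ 𝒳 → B ∈ 𝒳 → (A ⊞ B) ∈ 𝒳
  mem_of_biprod : ∀ ⦃A B : C⦄, (A ⊞ B) ∈ 𝒳 → A ∈ 𝒳 ∧ B ∈ 𝒳

/-- `⊥(𝒟[1]) = {M : Hom(M, 𝒟[1]) = 0}`. -/
def leftPerpShift (𝒟 : Set C) : Set C :=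
  {M : C | ∀ D ∈ 𝒟, ∀ f : M ⟶ (D⟦(1:ℤ)⟧), f = 0}

/-- `(𝒟[-1])⊥ = {M : Hom(𝒟[-1], M) = 0}`. -/
def shiftRightPerp (𝒟 : Set C) : Set C :=
  {M : C | ∀ D ∈ 𝒟, ∀ f : (D⟦(-1:ℤ)⟧) ⟶ M, f = 0}

/-- `A` admits a left `𝒟`-approximation. -/
def HasLeftApprox (𝒟 : Set C) (A : C) : Prop :=
  ∃ D ∈ 𝒟, ∃ f : A ⟶ D, ∀ D' ∈ 𝒟, ∀ g : A ⟶ D', ∃ h : D ⟶ D', f ≫ h = g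

/-- `A` admits a right `𝒟`-approximation. -/
def HasRightApprox (𝒟 : Set C) (A : C) : Prop :=
  ∃ D ∈ 𝒟, ∃ f : D ⟶ A, ∀ D' ∈ 𝒟, ∀ g : D' ⟶ A, ∃ h : D' ⟶ D, h ≫ f = g

/-- `μ⁻¹(ℳ;𝒟) = (𝒟 * ℳ[1]) ∩ ⊥(𝒟[1])`. -/
def muInv (ℳ 𝒟 : Set C) : Set C :=
  extClass 𝒟 (shiftSet ℳ (1:ℤ)) ∩ leftPerpShift 𝒟

/-- `μ(𝒩;𝒟) = (𝒩[-1] * 𝒟) ∩ (𝒟[-1])⊥`. -/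
def mu (𝒩 𝒟 : Set C) : Set C :=
  extClass (shiftSet 𝒩 (-1:ℤ)) 𝒟 ∩ shiftRightPerp 𝒟

/-- `(ℳ,𝒩)` is a `𝒟`-mutation pair. -/
def IsMutationPair (ℳ 𝒩 𝒟 : Set C) : Prop :=
  ℳ = mu 𝒩 𝒟 ∧ 𝒩 = muInv ℳ 𝒟

/-- Condition (RF): `𝒟` is functorially finite, rigid and `⊥(𝒟[1]) = (𝒟[-1])⊥`. -/
def RF (𝒟 : Set C) : Prop :=
  (∀ A : C, HasLeftApprox 𝒟 A) ∧ (∀ A : C, HasRightApprox 𝒟 A) ∧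
    homZero 𝒟 (shiftSet 𝒟 (1:ℤ)) ∧ leftPerpShift 𝒟 = shiftRightPerp 𝒟

/-- The Ext-injective objects of `𝒳`. -/
def extInj (𝒳 : Set C) : Set C :=
  {T : C | T ∈ 𝒳 ∧ ∀ A ∈ 𝒳, ∀ f : A ⟶ (T⟦(1:ℤ)⟧), f = 0}

/-- The Ext-projective objects of `𝒴`. -/
def extProj (𝒴 : Set C) : Set C :=
  {T : C | T ∈ 𝒴 ∧ ∀ B ∈ 𝒴, ∀ f : T ⟶ (B⟦(1:ℤ)⟧), f = 0}


set_option linter.unusedSectionVars false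

/-!
The key tool is a Schanuel lemma for triangles: if `A → B → Z → A[1]` and `A' → B' → Z → A'[1]`
are distinguished and `B → Z`, `B' → Z` factor through each other, then `A ⊕ B' ≅ A' ⊕ B`: they
are the fibres of `B ⊕ B' → Z` and `B' ⊕ B → Z`, which agree up to a shear automorphism. So a
subcategory containing `A` and `B'` contains `A'`.

For the core, a `Z` in `μ⁻¹(𝒳;𝒟) ∩ μ⁻¹(𝒲;𝒟)` sits in a triangle `M → D₀ → Z` with `D₀ → Z` a right
`𝒟`-approximation; it factors both ways through the triangles `X → D → Z` and `W → D' → Z` given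
by membership, because `Hom(𝒟, 𝒳[1]) = Hom(𝒟, 𝒲[1]) = 0`, so `M ∈ 𝒳 ∩ 𝒲`. For the mutation pair,
the cone of a left `𝒟`-approximation `M → D` of `M ∈ I` lies in `μ⁻¹(I;𝒟)` by rigidity of `𝒟`;
conversely `M ∈ μ(μ⁻¹(I;𝒟);𝒟)` yields triangles `M → D → N` and `I₀ → D' → N` with `I₀ ∈ I`, which
the Schanuel lemma compares.
-/

lemma eq_zero_of_mem_shiftRightPerp {𝒟 : Set C} {M D : C} (hM : M ∈ shiftRightPerp 𝒟)
    (hD : D ∈ 𝒟) (g : D ⟶ M⟦(1:ℤ)⟧) : g = 0 := by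
  have h := hM D hD (g⟦(-1:ℤ)⟧' ≫ (shiftFunctorCompIsoId C (1:ℤ) (-1) (by norm_num)).hom.app M)
  rw [← Limits.zero_comp (f := (shiftFunctorCompIsoId C (1:ℤ) (-1) (by norm_num)).hom.app M),
    cancel_mono, Functor.map_eq_zero_iff] at h
  exact h

lemma homZero_shiftSet_of_subset_shiftRightPerp {𝒮 𝒟 : Set C} (h : 𝒮 ⊆ shiftRightPerp 𝒟) :
    homZero 𝒟 (shiftSet 𝒮 (1:ℤ)) := by
  rintro D B hD ⟨S, hS, ⟨e⟩⟩ f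
  rw [← cancel_mono e.inv, Limits.zero_comp]
  exact eq_zero_of_mem_shiftRightPerp (h hS) hD _

namespace CategoryTheory.Pretriangulated

lemma distTriang_mk_comp_iso_hom {A B Z Z' : C} {a : A ⟶ B} {f : B ⟶ Z} {h : Z ⟶ A⟦(1:ℤ)⟧}
    (hT : Triangle.mk a f h ∈ distTriang C) (e : Z ≅ Z') :
    Triangle.mk a (f ≫ e.hom) (e.inv ≫ h) ∈ distTriang C :=
  isomorphic_distinguished _ hT _ (Triangle.isoMk _ _ (Iso.refl _) (Iso.refl _) e.symm
    (by simp [Triangle.mk]) (by simp [Triangle.mk]) (by simp [Triangle.mk]))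

lemma distTriang_mk_of_rotate {S D Z : C} {p : D ⟶ Z} {q : Z ⟶ S⟦(1:ℤ)⟧}
    {r : S⟦(1:ℤ)⟧ ⟶ D⟦(1:ℤ)⟧} (hT : Triangle.mk p q r ∈ distTriang C) :
    Triangle.mk (-(shiftFunctor C (1:ℤ)).preimage r) p q ∈ distTriang C := by
  rw [rotate_distinguished_triangle]
  convert hT using 1
  dsimp [Triangle.rotate, Triangle.mk]
  congr
  simp only [Functor.map_neg, Functor.map_preimage]
  exact neg_neg r

lemma nonempty_iso_of_distTriang {A B A' B' Z : C} {a : A ⟶ B} {f : B ⟶ Z}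
    {h : Z ⟶ A⟦(1:ℤ)⟧} {a' : A' ⟶ B'} {f' : B' ⟶ Z} {h' : Z ⟶ A'⟦(1:ℤ)⟧}
    (hT : Triangle.mk a f h ∈ distTriang C) (hT' : Triangle.mk a' f' h' ∈ distTriang C)
    (e : B ≅ B') (he : e.hom ≫ f' = f) : Nonempty (A ≅ A') := by
  have hcomm : f ≫ 𝟙 Z = e.hom ≫ f' := by rw [Category.comp_id, he]
  obtain ⟨u, hu₁, hu₃⟩ := complete_distinguished_triangle_morphism₁ _ _ hT hT' e.hom (𝟙 Z) hcomm
  have := isIso₁_of_isIso₂₃ (Triangle.homMk (Triangle.mk a f h) (Triangle.mk a' f' h') u e.hom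
    (𝟙 Z) hu₁ hcomm hu₃) hT hT' (inferInstanceAs (IsIso e.hom))
    (inferInstanceAs (IsIso (𝟙 Z)))
  exact ⟨@asIso _ _ _ _ u this⟩

lemma exists_distTriang_biprod_map_id {A B Z : C} (B' : C) {a : A ⟶ B} {f : B ⟶ Z}
    {h : Z ⟶ A⟦(1:ℤ)⟧} (hT : Triangle.mk a f h ∈ distTriang C) :
    ∃ h' : Z ⟶ (A ⊞ B')⟦(1:ℤ)⟧,
      Triangle.mk (biprod.map a (𝟙 B')) (biprod.fst ≫ f) h' ∈ distTriang C := by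
  -- Comparing the given triangle with the cone triangle of `a ⊞ 𝟙` along `inl` and `fst` gives
  -- `θ : Z ⟶ Q` and `η : Q ⟶ Z`. Then `θ ≫ η` is invertible by the five lemma, and so is `η ≫ θ`,
  -- which differs from an automorphism of the cone triangle by a map through the cone of `𝟙 B'`.
  obtain ⟨Q, q, r, hS⟩ := distinguished_cocone_triangle (biprod.map a (𝟙 B'))
  have hB' := contractible_distinguished B'
  let θ := completeDistinguishedTriangleMorphism _ _ hT hS biprod.inl biprod.inl
    (by simp [Triangle.mk])
  let η := completeDistinguishedTriangleMorphism _ _ hS hT biprod.fst biprod.fst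
    (by simp [Triangle.mk])
  let ι := completeDistinguishedTriangleMorphism _ _ hB' hS biprod.inr biprod.inr
    (by simp [Triangle.mk, contractibleTriangle])
  let π := completeDistinguishedTriangleMorphism _ _ hS hB' biprod.snd biprod.snd
    (by simp [Triangle.mk, contractibleTriangle])
  have hθη : IsIso (θ ≫ η).hom₃ := isIso₃_of_isIso₁₂ _ hT hT
    (by rw [show (θ ≫ η).hom₁ = 𝟙 _ from biprod.inl_fst]; infer_instance)
    (by rw [show (θ ≫ η).hom₂ = 𝟙 _ from biprod.inl_fst]; infer_instance)
  have hηθ : IsIso (η ≫ θ + π ≫ ι).hom₃ := isIso₃_of_isIso₁₂ _ hS hS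
    (by rw [show (η ≫ θ + π ≫ ι).hom₁ = 𝟙 _ from biprod.total]; infer_instance)
    (by rw [show (η ≫ θ + π ≫ ι).hom₂ = 𝟙 _ from biprod.total]; infer_instance)
  let θ₃ : Z ⟶ Q := θ.hom₃
  let η₃ : Q ⟶ Z := η.hom₃
  let ρ : Q ⟶ Q := (π ≫ ι).hom₃
  have hρ : ρ = 0 := by
    have hzero : IsZero (contractibleTriangle B').obj₃ := isZero_zero C
    change π.hom₃ ≫ ι.hom₃ = 0
    rw [hzero.eq_of_tgt π.hom₃ 0, Limits.zero_comp]
  change IsIso (θ₃ ≫ η₃) at hθη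
  change IsIso (η₃ ≫ θ₃ + ρ) at hηθ
  rw [hρ, add_zero] at hηθ
  have : Mono η₃ := mono_of_mono η₃ θ₃
  have : IsSplitEpi η₃ := IsSplitEpi.mk' ⟨inv (θ₃ ≫ η₃) ≫ θ₃, by simp⟩
  have : IsIso η₃ := isIso_of_mono_of_isSplitEpi _
  refine ⟨inv η₃ ≫ r, ?_⟩
  have hη : q ≫ η₃ = biprod.fst ≫ f := η.comm₂
  simpa only [asIso_hom, asIso_inv, hη] using distTriang_mk_comp_iso_hom hS (asIso η₃)

lemma nonempty_biprod_iso_of_distTriang {A B A' B' Z : C} {a : A ⟶ B} {f : B ⟶ Z}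
    {h : Z ⟶ A⟦(1:ℤ)⟧} {a' : A' ⟶ B'} {f' : B' ⟶ Z} {h' : Z ⟶ A'⟦(1:ℤ)⟧}
    (hT : Triangle.mk a f h ∈ distTriang C) (hT' : Triangle.mk a' f' h' ∈ distTriang C)
    (g : B' ⟶ B) (hg : g ≫ f = f') (g' : B ⟶ B') (hg' : g' ≫ f' = f) :
    Nonempty (A ⊞ B' ≅ A' ⊞ B) := by
  obtain ⟨k, hk⟩ := exists_distTriang_biprod_map_id B' hT
  obtain ⟨k', hk'⟩ := exists_distTriang_biprod_map_id B hT'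
  refine nonempty_iso_of_distTriang hk hk'
    ((Biprod.unipotentLower g).symm ≪≫ biprod.braiding B B' ≪≫ Biprod.unipotentLower g') ?_
  ext <;> simp [Biprod.ofComponents, hg, hg']

end CategoryTheory.Pretriangulated

lemma IsSubcat.mem_of_distTriang {𝒮 : Set C} (h𝒮 : IsSubcat 𝒮) {A B A' B' Z : C}
    {a : A ⟶ B} {f : B ⟶ Z} {h : Z ⟶ A⟦(1:ℤ)⟧} {a' : A' ⟶ B'} {f' : B' ⟶ Z}
    {h' : Z ⟶ A'⟦(1:ℤ)⟧} (hT : Triangle.mk a f h ∈ distTriang C)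
    (hT' : Triangle.mk a' f' h' ∈ distTriang C) (hA : A ∈ 𝒮) (hB' : B' ∈ 𝒮)
    (g : B' ⟶ B) (hg : g ≫ f = f') (g' : B ⟶ B') (hg' : g' ≫ f' = f) : A' ∈ 𝒮 :=
  have ⟨e⟩ := nonempty_biprod_iso_of_distTriang hT hT' g hg g' hg'
  (h𝒮.mem_of_biprod (h𝒮.mem_of_iso e (h𝒮.biprod_mem hA hB'))).1

lemma IsSubcat.inter {𝒳 𝒴 : Set C} (h𝒳 : IsSubcat 𝒳) (h𝒴 : IsSubcat 𝒴) :
    IsSubcat (𝒳 ∩ 𝒴) where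
  mem_of_iso _ _ e hA := ⟨h𝒳.mem_of_iso e hA.1, h𝒴.mem_of_iso e hA.2⟩
  biprod_mem _ _ hA hB := ⟨h𝒳.biprod_mem hA.1 hB.1, h𝒴.biprod_mem hA.2 hB.2⟩
  mem_of_biprod _ _ h :=
    ⟨⟨(h𝒳.mem_of_biprod h.1).1, (h𝒴.mem_of_biprod h.2).1⟩,
      ⟨(h𝒳.mem_of_biprod h.1).2, (h𝒴.mem_of_biprod h.2).2⟩⟩

lemma IsCotorsionPair.subset_leftPerpShift {𝒳 𝒲 𝒟 : Set C} (hpair : IsCotorsionPair 𝒳 𝒲)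
    (h : 𝒟 ⊆ 𝒲) : 𝒳 ⊆ leftPerpShift 𝒟 :=
  fun _ hA D hD f => hpair.1 hA ⟨D, h hD, ⟨Iso.refl _⟩⟩ f

lemma IsCotorsionPair.homZero_of_subset {𝒳 𝒲 𝒟 : Set C} (hpair : IsCotorsionPair 𝒳 𝒲)
    (h : 𝒟 ⊆ 𝒳) : homZero 𝒟 (shiftSet 𝒲 (1:ℤ)) :=
  fun _ _ hD hB f => hpair.1 (h hD) hB f

lemma mem_extClass_shiftSet_one_iff {𝒟 𝒮 : Set C} {Z : C} :
    Z ∈ extClass 𝒟 (shiftSet 𝒮 (1:ℤ)) ↔ ∃ (S D : C) (a : S ⟶ D) (p : D ⟶ Z)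
      (h : Z ⟶ S⟦(1:ℤ)⟧), S ∈ 𝒮 ∧ D ∈ 𝒟 ∧ Triangle.mk a p h ∈ distTriang C := by
  constructor
  · rintro ⟨D, Y, p, q, r, hD, ⟨S, hS, ⟨e⟩⟩, hT⟩
    exact ⟨S, D, _, p, q ≫ e.inv, hS, hD,
      distTriang_mk_of_rotate (distTriang_mk_comp_iso_hom hT e.symm)⟩
  · rintro ⟨S, D, a, p, h, hS, hD, hT⟩
    exact ⟨D, S⟦(1:ℤ)⟧, p, h, _, hD, ⟨S, hS, ⟨Iso.refl _⟩⟩, rot_of_distTriang _ hT⟩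

lemma mem_extClass_shiftSet_neg_one_iff {𝒩 𝒟 : Set C} {M : C} :
    M ∈ extClass (shiftSet 𝒩 (-1:ℤ)) 𝒟 ↔ ∃ (D N : C) (b : M ⟶ D) (c : D ⟶ N)
      (h : N ⟶ M⟦(1:ℤ)⟧), D ∈ 𝒟 ∧ N ∈ 𝒩 ∧ Triangle.mk b c h ∈ distTriang C := by
  constructor
  · rintro ⟨A, D, a, b, c, ⟨N, hN, ⟨w⟩⟩, hD, hT⟩
    let e : A⟦(1:ℤ)⟧ ≅ N :=
      (shiftFunctor C (1:ℤ)).mapIso w.symm ≪≫ (shiftFunctorCompIsoId C (-1:ℤ) 1 (by norm_num)).app N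
    exact ⟨D, N, b, c ≫ e.hom, _, hD, hN, distTriang_mk_comp_iso_hom (rot_of_distTriang _ hT) e⟩
  · rintro ⟨D, N, b, c, h, hD, hN, hT⟩
    exact ⟨N⟦(-1:ℤ)⟧, D, _, b, _, ⟨N, hN, ⟨Iso.refl _⟩⟩, hD, inv_rot_of_distTriang _ hT⟩

lemma muInv_mono {𝒮 𝒯 𝒟 : Set C} (h : 𝒮 ⊆ 𝒯) : muInv 𝒮 𝒟 ⊆ muInv 𝒯 𝒟 := by
  rintro Z ⟨⟨D, Y, f, g, k, hD, ⟨S, hS, e⟩, hT⟩, hZ⟩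
  exact ⟨⟨D, Y, f, g, k, hD, ⟨S, h hS, e⟩, hT⟩, hZ⟩

lemma mem_of_distTriang_of_rightApprox {𝒮 𝒟 : Set C} (h𝒮 : IsSubcat 𝒮) (hD𝒮 : 𝒟 ⊆ 𝒮)
    (hExt : homZero 𝒟 (shiftSet 𝒮 (1:ℤ))) {Z M D₀ : C} (hD₀ : D₀ ∈ 𝒟) {a : M ⟶ D₀}
    {p : D₀ ⟶ Z} {h : Z ⟶ M⟦(1:ℤ)⟧} (hT : Triangle.mk a p h ∈ distTriang C)
    (hp : ∀ D ∈ 𝒟, ∀ g : D ⟶ Z, ∃ v : D ⟶ D₀, v ≫ p = g)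
    (hZ : Z ∈ extClass 𝒟 (shiftSet 𝒮 (1:ℤ))) : M ∈ 𝒮 := by
  obtain ⟨S, D, a', p', h', hS, hD, hT'⟩ := mem_extClass_shiftSet_one_iff.1 hZ
  obtain ⟨v, hv⟩ := hp D hD p'
  obtain ⟨w, hw⟩ := Triangle.coyoneda_exact₃ _ hT' p (hExt hD₀ ⟨S, hS, ⟨Iso.refl _⟩⟩ _)
  exact h𝒮.mem_of_distTriang hT' hT hS (hD𝒮 hD₀) w hw.symm v hv

lemma muInv_inter_muInv {𝒮 𝒯 𝒟 : Set C} (h𝒮 : IsSubcat 𝒮) (h𝒯 : IsSubcat 𝒯)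
    (hD𝒮 : 𝒟 ⊆ 𝒮) (hD𝒯 : 𝒟 ⊆ 𝒯) (hExt𝒮 : homZero 𝒟 (shiftSet 𝒮 (1:ℤ)))
    (hExt𝒯 : homZero 𝒟 (shiftSet 𝒯 (1:ℤ))) (hright : ∀ A : C, HasRightApprox 𝒟 A) :
    muInv 𝒮 𝒟 ∩ muInv 𝒯 𝒟 = muInv (𝒮 ∩ 𝒯) 𝒟 := by
  refine subset_antisymm ?_ (Set.subset_inter (muInv_mono Set.inter_subset_left)
    (muInv_mono Set.inter_subset_right))
  rintro Z ⟨⟨hZ𝒮, hZperp⟩, hZ𝒯, -⟩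
  obtain ⟨D₀, hD₀, p, hp⟩ := hright Z
  obtain ⟨M, a, h, hT⟩ := distinguished_cocone_triangle₁ p
  have hM : M ∈ 𝒮 ∩ 𝒯 := ⟨mem_of_distTriang_of_rightApprox h𝒮 hD𝒮 hExt𝒮 hD₀ hT hp hZ𝒮,
    mem_of_distTriang_of_rightApprox h𝒯 hD𝒯 hExt𝒯 hD₀ hT hp hZ𝒯⟩
  exact ⟨mem_extClass_shiftSet_one_iff.2 ⟨M, D₀, a, p, h, hM, hD₀, hT⟩, hZperp⟩

lemma cone_mem_leftPerpShift_of_leftApprox {𝒟 : Set C} (hrigid : homZero 𝒟 (shiftSet 𝒟 (1:ℤ)))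
    {M D N : C} (hD : D ∈ 𝒟) {f : M ⟶ D} {g : D ⟶ N} {h : N ⟶ M⟦(1:ℤ)⟧}
    (hT : Triangle.mk f g h ∈ distTriang C)
    (hf : ∀ D' ∈ 𝒟, ∀ u : M ⟶ D', ∃ v : D ⟶ D', f ≫ v = u) : N ∈ leftPerpShift 𝒟 := by
  intro D' hD' φ
  obtain ⟨ψ, rfl⟩ : ∃ ψ : M⟦(1:ℤ)⟧ ⟶ D'⟦(1:ℤ)⟧, φ = h ≫ ψ :=
    Triangle.yoneda_exact₃ _ hT φ (hrigid hD ⟨D', hD', ⟨Iso.refl _⟩⟩ _)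
  obtain ⟨v, hv⟩ := hf D' hD' ((shiftFunctor C (1:ℤ)).preimage ψ)
  have hψ : ψ = f⟦(1:ℤ)⟧' ≫ v⟦(1:ℤ)⟧' := by
    rw [← Functor.map_comp, hv, Functor.map_preimage]
  have hhf : h ≫ f⟦(1:ℤ)⟧' = 0 := comp_distTriang_mor_zero₃₁ _ hT
  rw [hψ, ← Category.assoc, hhf, Limits.zero_comp]

lemma subset_mu_muInv {ℐ 𝒟 : Set C} (hℐ : ℐ ⊆ leftPerpShift 𝒟)
    (hleft : ∀ A : C, HasLeftApprox 𝒟 A) (hrigid : homZero 𝒟 (shiftSet 𝒟 (1:ℤ)))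
    (hperp : leftPerpShift 𝒟 = shiftRightPerp 𝒟) : ℐ ⊆ mu (muInv ℐ 𝒟) 𝒟 := by
  intro M hM
  obtain ⟨D, hD, f, hf⟩ := hleft M
  obtain ⟨N, g, h, hT⟩ := distinguished_cocone_triangle f
  have hN : N ∈ muInv ℐ 𝒟 := ⟨mem_extClass_shiftSet_one_iff.2 ⟨M, D, f, g, h, hM, hD, hT⟩,
    cone_mem_leftPerpShift_of_leftApprox hrigid hD hT hf⟩
  exact ⟨mem_extClass_shiftSet_neg_one_iff.2 ⟨D, N, f, g, h, hD, hN, hT⟩, hperp ▸ hℐ hM⟩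

lemma mu_muInv_subset {ℐ 𝒟 : Set C} (hℐ : IsSubcat ℐ) (hDℐ : 𝒟 ⊆ ℐ)
    (hExt : homZero 𝒟 (shiftSet ℐ (1:ℤ))) : mu (muInv ℐ 𝒟) 𝒟 ⊆ ℐ := by
  rintro M ⟨hM, hMperp⟩
  obtain ⟨D, N, b, c, h, hD, ⟨hN, -⟩, hT⟩ := mem_extClass_shiftSet_neg_one_iff.1 hM
  obtain ⟨S, D', a', p', h', hS, hD', hT'⟩ := mem_extClass_shiftSet_one_iff.1 hN
  obtain ⟨v, hv⟩ := Triangle.coyoneda_exact₃ _ hT p'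
    (eq_zero_of_mem_shiftRightPerp hMperp hD' _)
  obtain ⟨w, hw⟩ := Triangle.coyoneda_exact₃ _ hT' c (hExt hD ⟨S, hS, ⟨Iso.refl _⟩⟩ _)
  exact hℐ.mem_of_distTriang hT' hT hS (hDℐ hD) w hw.symm v hv.symm

/-- the core of the mutated cotorsion pair `(μ⁻¹(𝒳;𝒟), μ⁻¹(𝒲;𝒟))`
equals `μ⁻¹(I;𝒟)`, and `(I, μ⁻¹(I;𝒟))` is a `𝒟`-mutation pair, where `I = 𝒳 ∩ 𝒲`. -/
theorem stmt9 (k : Type*) [Field k] [Linear k C]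
    [∀ A B : C, Module.Finite k (A ⟶ B)] [IsIdempotentComplete C]
    (𝒳 𝒲 𝒟 : Set C) (hX : IsSubcat 𝒳) (hW : IsSubcat 𝒲) (hD : IsSubcat 𝒟)
    (hpair : IsCotorsionPair 𝒳 𝒲)
    (hDI : 𝒟 ⊆ 𝒳 ∩ 𝒲)
    (hRF : RF 𝒟) :
    muInv 𝒳 𝒟 ∩ muInv 𝒲 𝒟 = muInv (𝒳 ∩ 𝒲) 𝒟 ∧
    IsMutationPair (𝒳 ∩ 𝒲) (muInv (𝒳 ∩ 𝒲) 𝒟) 𝒟 := by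
  obtain ⟨hleft, hright, hrigid, hperp⟩ := hRF
  have hDX : 𝒟 ⊆ 𝒳 := hDI.trans Set.inter_subset_left
  have hDW : 𝒟 ⊆ 𝒲 := hDI.trans Set.inter_subset_right
  have hX𝒟 : 𝒳 ⊆ leftPerpShift 𝒟 := hpair.subset_leftPerpShift hDW
  have hX𝒟' : 𝒳 ⊆ shiftRightPerp 𝒟 := hperp ▸ hX𝒟
  refine ⟨muInv_inter_muInv hX hW hDX hDW (homZero_shiftSet_of_subset_shiftRightPerp hX𝒟')
    (hpair.homZero_of_subset hDX) hright, ?_, rfl⟩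
  exact subset_antisymm
    (subset_mu_muInv (Set.inter_subset_left.trans hX𝒟) hleft hrigid hperp)
    (mu_muInv_subset (hX.inter hW) hDI
      (homZero_shiftSet_of_subset_shiftRightPerp (Set.inter_subset_left.trans hX𝒟')))
end

section
/- Let C be a Hom-finite, Krull–Schmidt, k-linear triangulated category, (X,Y) a rigid torsion pair in C (i.e. a torsion pair with Hom(X,X[1])=0), and D a subcategory satisfying condition (RF) with D ⊆ X ⊆ (D[-1])⊥. Then the D-mutation (μ⁻¹(X;D), μ⁻¹(Y;D[1])) is again a rigid torsion pair. -/
open CategoryTheory CategoryTheory.Limits CategoryTheory.Pretriangulated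

variable {C : Type*} [Category C] [Preadditive C] [HasZeroObject C]
  [HasShift C ℤ] [∀ n : ℤ, (shiftFunctor C n).Additive] [Pretriangulated C]

/-! The category is only pretriangulated, so there is no octahedral axiom; membership is tested by
orthogonality instead: as `C = 𝒳 * 𝒴` with `Hom(𝒳, 𝒴) = 0`, an object lies in `𝒳` once it
has no maps to `𝒴`, and an object `W` lies in `𝒟 * 𝒳[1]` once every map `W ⟶ 𝒴[1]` vanishing on
all maps from `𝒟` is zero.

Orthogonality and rigidity of the mutated classes follow by factoring a map through the two
defining triangles. To decompose `Z`, let `U` be the cone of a right `𝒟`-approximation of `Z`, so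
`Hom(𝒟, U) = 0`. Splitting `U[-1]` by the torsion pair and replacing its torsion part `X₁` by the
cone `M` of a left `𝒟`-approximation of `X₁` gives a triangle `M → U → N` with
`M ∈ μ⁻¹(𝒳; 𝒟)` and `N ∈ μ⁻¹(𝒴; 𝒟[1])`. The fibre of the composite `Z → U → N` lies in
`μ⁻¹(𝒳; 𝒟)` by the criterion above, since `Hom(𝒟, U) = 0` lets maps from `𝒟` be lifted along
the triangles. -/

section Shift

variable {𝒞 : Type*} [Category 𝒞] [HasShift 𝒞 ℤ] {A B : 𝒞} {𝒜 : Set 𝒞}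

lemma subsingleton_hom_shift_iff (n : ℤ) :
    Subsingleton (A⟦n⟧ ⟶ B⟦n⟧) ↔ Subsingleton (A ⟶ B) :=
  (Functor.FullyFaithful.ofFullyFaithful (shiftFunctor 𝒞 n)).homEquiv.subsingleton_congr.symm

lemma subsingleton_hom_shift_neg_one_left_iff :
    Subsingleton (A⟦(-1:ℤ)⟧ ⟶ B) ↔ Subsingleton (A ⟶ B⟦(1:ℤ)⟧) := by
  rw [← subsingleton_hom_shift_iff (1:ℤ)]
  exact (((shiftFunctorCompIsoId 𝒞 (-1) 1 (by norm_num)).app A).homCongr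
    (Iso.refl _)).subsingleton_congr

lemma subsingleton_hom_shift_neg_one_right_iff :
    Subsingleton (A ⟶ B⟦(-1:ℤ)⟧) ↔ Subsingleton (A⟦(1:ℤ)⟧ ⟶ B) := by
  rw [← subsingleton_hom_shift_iff (1:ℤ)]
  exact ((Iso.refl _).homCongr
    ((shiftFunctorCompIsoId 𝒞 (-1) 1 (by norm_num)).app B)).subsingleton_congr

lemma mem_shiftSet (hA : A ∈ 𝒜) (n : ℤ) : A⟦n⟧ ∈ shiftSet 𝒜 n :=
  ⟨A, hA, ⟨Iso.refl _⟩⟩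

lemma shiftSet_mono {ℬ : Set 𝒞} (h : 𝒜 ⊆ ℬ) (n : ℤ) : shiftSet 𝒜 n ⊆ shiftSet ℬ n :=
  fun _ ⟨A, hA, e⟩ => ⟨A, h hA, e⟩

lemma mem_shiftSet_of_shift_neg_one_mem (hA : A⟦(-1:ℤ)⟧ ∈ 𝒜) : A ∈ shiftSet 𝒜 (1:ℤ) :=
  ⟨_, hA, ⟨(shiftFunctorCompIsoId 𝒞 (-1) 1 (by norm_num)).app A⟩⟩

lemma forall_mem_shiftSet_iff {P : 𝒞 → Prop} (hP : ∀ ⦃B B' : 𝒞⦄, (B ≅ B') → P B → P B')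
    (n : ℤ) : (∀ B ∈ shiftSet 𝒜 n, P B) ↔ ∀ A ∈ 𝒜, P (A⟦n⟧) :=
  ⟨fun h _ hA => h _ (mem_shiftSet hA n), fun h _ ⟨_, hA, ⟨e⟩⟩ => hP e (h _ hA)⟩

end Shift

section Orthogonality

variable {𝒞 : Type*} [Category 𝒞] [Preadditive 𝒞] {𝒜 ℬ : Set 𝒞} {A B : 𝒞}

lemma homZero.subsingleton (h : homZero 𝒜 ℬ) (hA : A ∈ 𝒜) (hB : B ∈ ℬ) :
    Subsingleton (A ⟶ B) :=
  subsingleton_of_forall_eq 0 (h hA hB)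

lemma homZero_of_subsingleton (h : ∀ A ∈ 𝒜, ∀ B ∈ ℬ, Subsingleton (A ⟶ B)) : homZero 𝒜 ℬ :=
  fun A B hA hB f => (h A hA B hB).elim f 0

lemma homZero.mono {𝒜' ℬ' : Set 𝒞} (h : homZero 𝒜 ℬ) (h𝒜 : 𝒜' ⊆ 𝒜) (hℬ : ℬ' ⊆ ℬ) :
    homZero 𝒜' ℬ' :=
  fun _ _ hA hB => h (h𝒜 hA) (hℬ hB)

variable [HasShift 𝒞 ℤ]

lemma homZero.shiftSet (h : homZero 𝒜 ℬ) (n : ℤ) : homZero (shiftSet 𝒜 n) (shiftSet ℬ n) := by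
  refine homZero_of_subsingleton fun _ ⟨A, hA, ⟨eA⟩⟩ _ ⟨B, hB, ⟨eB⟩⟩ => ?_
  exact (eA.homCongr eB).subsingleton_congr.1
    ((subsingleton_hom_shift_iff n).2 (h.subsingleton hA hB))

lemma mem_leftPerpShift_iff :
    A ∈ leftPerpShift 𝒜 ↔ ∀ D ∈ 𝒜, Subsingleton (A ⟶ D⟦(1:ℤ)⟧) :=
  forall₂_congr fun _ _ => (subsingleton_iff_forall_eq 0).symm

lemma homZero_leftPerpShift : homZero (leftPerpShift 𝒜) (shiftSet 𝒜 (1:ℤ)) :=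
  homZero_of_subsingleton fun _ hA => (forall_mem_shiftSet_iff
    (fun _ _ e h => ((Iso.refl _).homCongr e).subsingleton_congr.1 h) 1).2
      (mem_leftPerpShift_iff.1 hA)

lemma subsingleton_hom_shift_of_mem_leftPerpShift (hperp : leftPerpShift 𝒜 = shiftRightPerp 𝒜)
    {M D : 𝒞} (hM : M ∈ leftPerpShift 𝒜) (hD : D ∈ 𝒜) : Subsingleton (D ⟶ M⟦(1:ℤ)⟧) := by
  rw [hperp] at hM
  exact subsingleton_hom_shift_neg_one_left_iff.1 (subsingleton_of_forall_eq 0 (hM D hD))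

lemma mem_leftPerpShift_shiftSet_iff (hperp : leftPerpShift 𝒜 = shiftRightPerp 𝒜) {N : 𝒞} :
    N ∈ leftPerpShift (shiftSet 𝒜 (1:ℤ)) ↔ ∀ D ∈ 𝒜, Subsingleton (D ⟶ N) :=
  calc N ∈ leftPerpShift (shiftSet 𝒜 (1:ℤ))
      ↔ ∀ D ∈ 𝒜, Subsingleton (N ⟶ D⟦(1:ℤ)⟧⟦(1:ℤ)⟧) :=
        mem_leftPerpShift_iff.trans <| forall_mem_shiftSet_iff (fun _ _ e h =>
          ((Iso.refl N).homCongr ((shiftFunctor 𝒞 1).mapIso e)).subsingleton_congr.1 h) 1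
    _ ↔ N⟦(-1:ℤ)⟧ ∈ leftPerpShift 𝒜 :=
        (mem_leftPerpShift_iff.trans
          (forall₂_congr fun _ _ => subsingleton_hom_shift_neg_one_left_iff)).symm
    _ ↔ ∀ D ∈ 𝒜, Subsingleton (D ⟶ N) := by
        rw [hperp]
        exact forall₂_congr fun _ _ =>
          (subsingleton_iff_forall_eq 0).symm.trans (subsingleton_hom_shift_iff (-1))

end Orthogonality

section Extensions

variable {𝒜 ℬ : Set C}

lemma mem_extClass_of_iso {Z Z' : C} (e : Z ≅ Z') (hZ : Z ∈ extClass 𝒜 ℬ) :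
    Z' ∈ extClass 𝒜 ℬ := by
  obtain ⟨A, B, f, g, h, hA, hB, hT⟩ := hZ
  refine ⟨A, B, f ≫ e.hom, e.inv ≫ g, h, hA, hB, isomorphic_distinguished _ hT _ ?_⟩
  exact Triangle.isoMk _ _ (Iso.refl _) e.symm (Iso.refl _)
    (show (f ≫ e.hom) ≫ e.inv = 𝟙 A ≫ f by simp) (show (e.inv ≫ g) ≫ 𝟙 B = e.inv ≫ g by simp)
    (show h ≫ (𝟙 A)⟦(1:ℤ)⟧' = 𝟙 B ≫ h by simp)

lemma shiftSet_extClass_subset :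
    shiftSet (extClass 𝒜 ℬ) (1:ℤ) ⊆ extClass (shiftSet 𝒜 1) (shiftSet ℬ 1) := by
  rintro _ ⟨Z, ⟨A, B, f, g, h, hA, hB, hT⟩, ⟨e⟩⟩
  exact mem_extClass_of_iso e ⟨_, _, _, _, _, mem_shiftSet hA 1, mem_shiftSet hB 1,
    Triangle.shift_distinguished _ hT 1⟩

end Extensions

lemma Triangle.yoneda_exact₁ (T : Triangle C)
    (hT : T ∈ distTriang C) {X : C} (f : T.obj₁ ⟶ X) (hf : T.mor₃ ≫ f⟦(1:ℤ)⟧' = 0) :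
    ∃ g : T.obj₂ ⟶ X, f = T.mor₁ ≫ g := by
  obtain ⟨g, hg⟩ : ∃ g : T.obj₂⟦(1:ℤ)⟧ ⟶ X⟦(1:ℤ)⟧, f⟦(1:ℤ)⟧' = (-T.mor₁⟦(1:ℤ)⟧') ≫ g :=
    Triangle.yoneda_exact₃ _ (rot_of_distTriang _ hT) (f⟦(1:ℤ)⟧') hf
  refine ⟨-(shiftFunctor C (1:ℤ)).preimage g, (shiftFunctor C (1:ℤ)).map_injective ?_⟩
  rw [hg, Functor.map_comp, Functor.map_neg, Functor.map_preimage, Preadditive.neg_comp,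
    Preadditive.comp_neg]

section TorsionPairs

variable {𝒳 𝒴 : Set C}

lemma IsSubcat.mem_of_retract (h𝒳 : IsSubcat 𝒳) {A B : C} (i : A ⟶ B) (r : B ⟶ A)
    (hir : i ≫ r = 𝟙 A) (hB : B ∈ 𝒳) : A ∈ 𝒳 := by
  have : Mono i := mono_of_mono_fac hir
  obtain ⟨K, g, h, hT⟩ := distinguished_cocone_triangle i
  obtain ⟨e, -⟩ := exists_iso_binaryBiproduct_of_distTriang _ hT
    (Triangle.mor₃_eq_zero_of_mono₁ _ hT this)
  exact (h𝒳.mem_of_biprod (h𝒳.mem_of_iso e hB)).1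

lemma IsTorsionPair.mem_left (hpair : IsTorsionPair 𝒳 𝒴) (h𝒳 : IsSubcat 𝒳) {Z : C}
    (hZ : ∀ Y ∈ 𝒴, Subsingleton (Z ⟶ Y)) : Z ∈ 𝒳 := by
  obtain ⟨A, B, f, g, h, hA, hB, hT⟩ := hpair.2 Z
  obtain ⟨u, hu⟩ := Triangle.coyoneda_exact₂ _ hT (𝟙 Z) ((hZ B hB).elim _ _)
  exact h𝒳.mem_of_retract u f hu.symm hA

lemma IsTorsionPair.mem_right (hpair : IsTorsionPair 𝒳 𝒴) (h𝒴 : IsSubcat 𝒴) {Z : C}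
    (hZ : ∀ X ∈ 𝒳, Subsingleton (X ⟶ Z)) : Z ∈ 𝒴 := by
  obtain ⟨A, B, f, g, h, hA, hB, hT⟩ := hpair.2 Z
  obtain ⟨v, hv⟩ := Triangle.yoneda_exact₂ _ hT (𝟙 Z) ((hZ A hA).elim _ _)
  exact h𝒴.mem_of_retract g v hv.symm hB

lemma IsTorsionPair.exists_shift_rightApprox (hpair : IsTorsionPair 𝒳 𝒴) (U : C) :
    ∃ X₁ ∈ 𝒳, ∃ i : X₁⟦(1:ℤ)⟧ ⟶ U, ∀ X ∈ 𝒳, ∀ ξ : X⟦(1:ℤ)⟧ ⟶ U, ∃ η, ξ = η ≫ i := by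
  obtain ⟨X₁, Y₁, a, b, c, hX₁, hY₁, hT⟩ := hpair.2 (U⟦(-1:ℤ)⟧)
  let T := (CategoryTheory.shiftFunctor (Triangle C) (1:ℤ)).obj (Triangle.mk a b c)
  let e : T.obj₂ ≅ U := (shiftFunctorCompIsoId C (-1) 1 (by norm_num)).app U
  refine ⟨X₁, hX₁, T.mor₁ ≫ e.hom, fun X hX ξ => ?_⟩
  have : Subsingleton (X⟦(1:ℤ)⟧ ⟶ T.obj₃) :=
    (subsingleton_hom_shift_iff 1).2 (hpair.1.subsingleton hX hY₁)
  obtain ⟨η, hη⟩ := Triangle.coyoneda_exact₂ _ (Triangle.shift_distinguished _ hT 1) (ξ ≫ e.inv)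
    (Subsingleton.elim _ _)
  exact ⟨η, ((Iso.comp_inv_eq e).1 hη).trans (Category.assoc _ _ _)⟩

end TorsionPairs

section Approximations

variable {𝒟 : Set C}

lemma subsingleton_hom_cone_of_rightApprox (hDrig : homZero 𝒟 (shiftSet 𝒟 (1:ℤ))) {D₀ Z U : C}
    (hD₀ : D₀ ∈ 𝒟) {d : D₀ ⟶ Z} {e : Z ⟶ U} {r : U ⟶ D₀⟦(1:ℤ)⟧}
    (hd : ∀ D ∈ 𝒟, ∀ g : D ⟶ Z, ∃ h, h ≫ d = g) (hT : Triangle.mk d e r ∈ distTriang C)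
    {D : C} (hD : D ∈ 𝒟) : Subsingleton (D ⟶ U) := by
  refine subsingleton_of_forall_eq 0 fun φ => ?_
  obtain ⟨ψ, rfl⟩ : ∃ ψ : D ⟶ Z, φ = ψ ≫ e :=
    Triangle.coyoneda_exact₃ _ hT φ (hDrig hD (mem_shiftSet hD₀ 1) _)
  obtain ⟨h, rfl⟩ := hd D hD ψ
  have hde : d ≫ e = 0 := comp_distTriang_mor_zero₁₂ _ hT
  rw [Category.assoc, hde, comp_zero]

lemma mem_leftPerpShift_of_leftApprox (hDrig : homZero 𝒟 (shiftSet 𝒟 (1:ℤ))) {X D₀ M : C}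
    (hD₀ : D₀ ∈ 𝒟) {α : X ⟶ D₀} {β : D₀ ⟶ M} {θ : M ⟶ X⟦(1:ℤ)⟧}
    (hα : ∀ D ∈ 𝒟, ∀ g : X ⟶ D, ∃ h, α ≫ h = g) (hT : Triangle.mk α β θ ∈ distTriang C) :
    M ∈ leftPerpShift 𝒟 := by
  intro D hD φ
  obtain ⟨ψ, rfl⟩ : ∃ ψ : X⟦(1:ℤ)⟧ ⟶ D⟦(1:ℤ)⟧, φ = θ ≫ ψ :=
    Triangle.yoneda_exact₃ _ hT φ (hDrig hD₀ (mem_shiftSet hD 1) _)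
  obtain ⟨h, hh⟩ := hα D hD ((shiftFunctor C (1:ℤ)).preimage ψ)
  have hψ : ψ = α⟦(1:ℤ)⟧' ≫ h⟦(1:ℤ)⟧' := by rw [← Functor.map_comp, hh, Functor.map_preimage]
  have hθα : θ ≫ α⟦(1:ℤ)⟧' = 0 := comp_distTriang_mor_zero₃₁ _ hT
  rw [hψ, ← Category.assoc, hθα, zero_comp]

end Approximations

section MutatedClasses

variable {𝒳 𝒴 𝒟 : Set C}

lemma exists_forall_eq_zero_of_mem_extClass (h𝒳𝒴 : homZero 𝒳 𝒴) {M : C}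
    (hM : M ∈ extClass 𝒟 (shiftSet 𝒳 (1:ℤ))) :
    ∃ D ∈ 𝒟, ∃ β : D ⟶ M, ∀ Y ∈ 𝒴, ∀ ρ : M ⟶ Y⟦(1:ℤ)⟧, β ≫ ρ = 0 → ρ = 0 := by
  obtain ⟨D, B, β, θ, γ, hD, hB, hT⟩ := hM
  refine ⟨D, hD, β, fun Y hY ρ hρ => ?_⟩
  obtain ⟨ρ₁, rfl⟩ : ∃ ρ₁ : B ⟶ Y⟦(1:ℤ)⟧, ρ = θ ≫ ρ₁ := Triangle.yoneda_exact₂ _ hT ρ hρ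
  rw [h𝒳𝒴.shiftSet 1 hB (mem_shiftSet hY 1) ρ₁, comp_zero]

lemma mem_extClass_of_forall_eq_zero (hpair : IsTorsionPair 𝒳 𝒴) (h𝒳 : IsSubcat 𝒳)
    (h𝒟𝒴 : homZero 𝒟 𝒴) {M : C} (happ : HasRightApprox 𝒟 M)
    (hM : ∀ Y ∈ 𝒴, ∀ ρ : M ⟶ Y⟦(1:ℤ)⟧, (∀ D ∈ 𝒟, ∀ u : D ⟶ M, u ≫ ρ = 0) → ρ = 0) :
    M ∈ extClass 𝒟 (shiftSet 𝒳 (1:ℤ)) := by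
  obtain ⟨D, hD, d, hd⟩ := happ
  obtain ⟨R, g, h, hT⟩ := distinguished_cocone_triangle d
  refine ⟨D, R, d, g, h, hD,
    mem_shiftSet_of_shift_neg_one_mem (hpair.mem_left h𝒳 fun Y hY => ?_), hT⟩
  refine subsingleton_hom_shift_neg_one_left_iff.2 (subsingleton_of_forall_eq 0 fun φ => ?_)
  have hdg : d ≫ g = 0 := comp_distTriang_mor_zero₁₂ _ hT
  have hgφ : g ≫ φ = 0 := hM Y hY _ fun D' hD' u => by
    obtain ⟨v, rfl⟩ := hd D' hD' u
    rw [Category.assoc, ← Category.assoc d, hdg, zero_comp, comp_zero]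
  obtain ⟨φ₁, rfl⟩ : ∃ φ₁ : D⟦(1:ℤ)⟧ ⟶ Y⟦(1:ℤ)⟧, φ = h ≫ φ₁ :=
    Triangle.yoneda_exact₃ _ hT φ hgφ
  rw [h𝒟𝒴.shiftSet 1 (mem_shiftSet hD 1) (mem_shiftSet hY 1) φ₁, comp_zero]

lemma mem_extClass_shiftSet_of_forall_factors (hpair : IsTorsionPair 𝒳 𝒴) (h𝒴 : IsSubcat 𝒴)
    (h𝒳𝒟 : 𝒳 ⊆ leftPerpShift 𝒟) {D₀ N : C} (hD₀ : D₀ ∈ 𝒟) (σ : D₀⟦(1:ℤ)⟧ ⟶ N)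
    (hσ : ∀ X ∈ 𝒳, ∀ ψ : X⟦(1:ℤ)⟧ ⟶ N, ∃ τ, ψ = τ ≫ σ) :
    N ∈ extClass (shiftSet 𝒟 (1:ℤ)) (shiftSet 𝒴 (1:ℤ)) := by
  obtain ⟨Q, g, h, hT⟩ := distinguished_cocone_triangle σ
  refine ⟨_, Q, σ, g, h, mem_shiftSet hD₀ 1,
    mem_shiftSet_of_shift_neg_one_mem (hpair.mem_right h𝒴 fun X hX => ?_), hT⟩
  refine subsingleton_hom_shift_neg_one_right_iff.2 (subsingleton_of_forall_eq 0 fun φ => ?_)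
  have hX𝒟 : Subsingleton (X⟦(1:ℤ)⟧ ⟶ D₀⟦(1:ℤ)⟧⟦(1:ℤ)⟧) :=
    (subsingleton_hom_shift_iff 1).2 (mem_leftPerpShift_iff.1 (h𝒳𝒟 hX) D₀ hD₀)
  obtain ⟨ψ, rfl⟩ : ∃ ψ : X⟦(1:ℤ)⟧ ⟶ N, φ = ψ ≫ g :=
    Triangle.coyoneda_exact₃ _ hT φ (hX𝒟.elim _ _)
  obtain ⟨τ, rfl⟩ := hσ X hX ψ
  have hσg : σ ≫ g = 0 := comp_distTriang_mor_zero₁₂ _ hT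
  rw [Category.assoc, hσg, comp_zero]

lemma mem_muInv_of_leftApprox (hDrig : homZero 𝒟 (shiftSet 𝒟 (1:ℤ))) {X D₀ M : C}
    (hX : X ∈ 𝒳) (hD₀ : D₀ ∈ 𝒟) {α : X ⟶ D₀} {β : D₀ ⟶ M} {θ : M ⟶ X⟦(1:ℤ)⟧}
    (hα : ∀ D ∈ 𝒟, ∀ g : X ⟶ D, ∃ h, α ≫ h = g) (hT : Triangle.mk α β θ ∈ distTriang C) :
    M ∈ muInv 𝒳 𝒟 :=
  ⟨⟨D₀, X⟦(1:ℤ)⟧, β, θ, -α⟦(1:ℤ)⟧', hD₀, mem_shiftSet hX 1, rot_of_distTriang _ hT⟩,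
    mem_leftPerpShift_of_leftApprox hDrig hD₀ hα hT⟩

end MutatedClasses

section Decomposition

variable {𝒳 𝒴 𝒟 : Set C}

lemma mem_extClass_muInv_of_subsingleton (hpair : IsTorsionPair 𝒳 𝒴) (h𝒴 : IsSubcat 𝒴)
    (hrigid : homZero 𝒳 (shiftSet 𝒳 (1:ℤ))) (hLA : ∀ A : C, HasLeftApprox 𝒟 A)
    (hDrig : homZero 𝒟 (shiftSet 𝒟 (1:ℤ))) (hperp : leftPerpShift 𝒟 = shiftRightPerp 𝒟)
    (h𝒳𝒟 : 𝒳 ⊆ leftPerpShift 𝒟) {U : C} (hU : ∀ D ∈ 𝒟, Subsingleton (D ⟶ U)) :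
    U ∈ extClass (muInv 𝒳 𝒟) (muInv 𝒴 (shiftSet 𝒟 (1:ℤ))) := by
  obtain ⟨X₁, hX₁, i, hi⟩ := hpair.exists_shift_rightApprox U
  obtain ⟨D₀, hD₀, α, hα⟩ := hLA X₁
  obtain ⟨M, β, θ, hT₁⟩ := distinguished_cocone_triangle α
  have hM : M ∈ muInv 𝒳 𝒟 := mem_muInv_of_leftApprox hDrig hX₁ hD₀ hα hT₁
  obtain ⟨N, n, s, hT₂⟩ := distinguished_cocone_triangle (θ ≫ i)
  obtain ⟨σ, hσn, hσs⟩ : ∃ σ : D₀⟦(1:ℤ)⟧ ⟶ N,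
      (-α⟦(1:ℤ)⟧') ≫ σ = i ≫ n ∧ (-β⟦(1:ℤ)⟧') ≫ (𝟙 M)⟦(1:ℤ)⟧' = σ ≫ s :=
    complete_distinguished_triangle_morphism _ _
      (rot_of_distTriang _ (rot_of_distTriang _ hT₁)) hT₂ (𝟙 M) i (Category.id_comp _).symm
  rw [CategoryTheory.Functor.map_id, Category.comp_id] at hσs
  have hN : N ∈ leftPerpShift (shiftSet 𝒟 (1:ℤ)) :=
    (mem_leftPerpShift_shiftSet_iff hperp).2 fun D hD => subsingleton_of_forall_eq 0 fun φ => by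
      have hDM := subsingleton_hom_shift_of_mem_leftPerpShift hperp hM.2 hD
      obtain ⟨ψ, rfl⟩ : ∃ ψ : D ⟶ U, φ = ψ ≫ n :=
        Triangle.coyoneda_exact₃ _ hT₂ φ (hDM.elim _ _)
      rw [(hU D hD).elim ψ 0, zero_comp]
  refine ⟨M, N, θ ≫ i, n, s, hM, ⟨mem_extClass_shiftSet_of_forall_factors hpair h𝒴 h𝒳𝒟 hD₀ σ
    fun X hX ψ => ?_, hN⟩, hT₂⟩
  -- by rigidity of `𝒳`, `ψ ≫ s` factors through `β⟦1⟧' = -σ ≫ s`; so corrected, `ψ` lifts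
  -- along `n` to `U`, then along `i`, and `i ≫ n` factors through `σ`
  obtain ⟨c, hc⟩ := (shiftFunctor C (1:ℤ)).map_surjective (ψ ≫ s)
  obtain ⟨c', rfl⟩ : ∃ c' : X ⟶ D₀, c = c' ≫ β :=
    Triangle.coyoneda_exact₃ _ hT₁ c (hrigid hX (mem_shiftSet hX₁ 1) _)
  have hs : (ψ + c'⟦(1:ℤ)⟧' ≫ σ) ≫ s = 0 := by
    rw [Preadditive.add_comp, Category.assoc, ← hσs, ← hc, Functor.map_comp,
      Preadditive.comp_neg, add_neg_cancel]
  obtain ⟨ξ, hξ⟩ : ∃ ξ : X⟦(1:ℤ)⟧ ⟶ U, ψ + c'⟦(1:ℤ)⟧' ≫ σ = ξ ≫ n :=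
    Triangle.coyoneda_exact₃ _ hT₂ _ hs
  obtain ⟨η, rfl⟩ := hi X hX ξ
  refine ⟨-(η ≫ α⟦(1:ℤ)⟧') - c'⟦(1:ℤ)⟧', ?_⟩
  rw [Preadditive.sub_comp, Preadditive.neg_comp, Category.assoc, ← Preadditive.comp_neg,
    ← Preadditive.neg_comp, hσn, ← Category.assoc, ← hξ, add_sub_cancel_right]

end Decomposition

section Gluing

variable {𝒳 𝒴 𝒟 : Set C} {D₀ Z U M N W : C} {d : D₀ ⟶ Z} {e : Z ⟶ U} {r : U ⟶ D₀⟦(1:ℤ)⟧}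
  {m : M ⟶ U} {n : U ⟶ N} {s : N ⟶ M⟦(1:ℤ)⟧} {w : W ⟶ Z} {a : N ⟶ W⟦(1:ℤ)⟧}

lemma fiber_comp_eq_zero (hTU : Triangle.mk d e r ∈ distTriang C)
    (hTN : Triangle.mk m n s ∈ distTriang C) (hTW : Triangle.mk w (e ≫ n) a ∈ distTriang C)
    {T : C} {χ : Z ⟶ T} (hχ : d ≫ χ = 0) (hm : ∀ χ₁ : U ⟶ T, m ≫ χ₁ = 0) : w ≫ χ = 0 := by
  obtain ⟨χ₁, rfl⟩ : ∃ χ₁ : U ⟶ T, χ = e ≫ χ₁ := Triangle.yoneda_exact₂ _ hTU χ hχ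
  obtain ⟨ζ, rfl⟩ : ∃ ζ : N ⟶ T, χ₁ = n ≫ ζ := Triangle.yoneda_exact₂ _ hTN χ₁ (hm χ₁)
  have hwen : w ≫ e ≫ n = 0 := comp_distTriang_mor_zero₁₂ _ hTW
  rw [← Category.assoc e, ← Category.assoc, hwen, zero_comp]

lemma fiber_mem_leftPerpShift (hDrig : homZero 𝒟 (shiftSet 𝒟 (1:ℤ))) (hD₀ : D₀ ∈ 𝒟)
    (hTU : Triangle.mk d e r ∈ distTriang C) (hTN : Triangle.mk m n s ∈ distTriang C)
    (hTW : Triangle.mk w (e ≫ n) a ∈ distTriang C) (hM : M ∈ leftPerpShift 𝒟)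
    (hN : N ∈ leftPerpShift (shiftSet 𝒟 (1:ℤ))) : W ∈ leftPerpShift 𝒟 := by
  intro D hD φ
  obtain ⟨χ, rfl⟩ : ∃ χ : Z ⟶ D⟦(1:ℤ)⟧, φ = w ≫ χ :=
    Triangle.yoneda_exact₁ _ hTW φ (hN _ (mem_shiftSet hD 1) _)
  exact fiber_comp_eq_zero hTU hTN hTW (hDrig hD₀ (mem_shiftSet hD 1) _) fun _ => hM D hD _

lemma fiber_mem_extClass (hpair : IsTorsionPair 𝒳 𝒴) (h𝒳 : IsSubcat 𝒳) (h𝒟𝒴 : homZero 𝒟 𝒴)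
    (hRA : ∀ A : C, HasRightApprox 𝒟 A) (hD₀ : D₀ ∈ 𝒟) (hU : ∀ D ∈ 𝒟, Subsingleton (D ⟶ U))
    (hTU : Triangle.mk d e r ∈ distTriang C) (hTN : Triangle.mk m n s ∈ distTriang C)
    (hTW : Triangle.mk w (e ≫ n) a ∈ distTriang C) (hM : M ∈ extClass 𝒟 (shiftSet 𝒳 (1:ℤ))) :
    W ∈ extClass 𝒟 (shiftSet 𝒳 (1:ℤ)) := by
  obtain ⟨D₁, hD₁, β, hβ⟩ := exists_forall_eq_zero_of_mem_extClass hpair.1 hM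
  have hβm : β ≫ m = 0 := (hU D₁ hD₁).elim _ _
  refine mem_extClass_of_forall_eq_zero hpair h𝒳 h𝒟𝒴 (hRA W) fun Y hY ψ hψ => ?_
  -- `n ≫ a` factors through `D₀⟦1⟧`, so `a ≫ ψ⟦1⟧'` factors through `s` as some `ρ`;
  -- `β⟦1⟧'` lifts along `s`, whence `β⟦1⟧' ≫ ρ = 0` and `ρ = 0`
  have haψ : a ≫ ψ⟦(1:ℤ)⟧' = 0 := by
    have hena : e ≫ n ≫ a = 0 := by
      rw [← Category.assoc]; exact comp_distTriang_mor_zero₂₃ _ hTW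
    obtain ⟨l, hl⟩ : ∃ l : D₀⟦(1:ℤ)⟧ ⟶ W⟦(1:ℤ)⟧, n ≫ a = r ≫ l :=
      Triangle.yoneda_exact₃ _ hTU _ hena
    have hnaψ : n ≫ a ≫ ψ⟦(1:ℤ)⟧' = 0 := by
      rw [← Category.assoc, hl, Category.assoc, ← Functor.map_preimage (shiftFunctor C 1) l,
        ← Functor.map_comp, hψ D₀ hD₀, Functor.map_zero, comp_zero]
    obtain ⟨ρ, hρ⟩ : ∃ ρ : M⟦(1:ℤ)⟧ ⟶ Y⟦(1:ℤ)⟧⟦(1:ℤ)⟧, a ≫ ψ⟦(1:ℤ)⟧' = s ≫ ρ :=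
      Triangle.yoneda_exact₃ _ hTN _ hnaψ
    have hβm' : β⟦(1:ℤ)⟧' ≫ m⟦(1:ℤ)⟧' = 0 := by rw [← Functor.map_comp, hβm, Functor.map_zero]
    obtain ⟨τ, hτ⟩ : ∃ τ : D₁⟦(1:ℤ)⟧ ⟶ N, β⟦(1:ℤ)⟧' = τ ≫ s :=
      Triangle.coyoneda_exact₁ _ hTN _ hβm'
    obtain ⟨ρ₀, rfl⟩ := (shiftFunctor C (1:ℤ)).map_surjective ρ
    have hβρ : β ≫ ρ₀ = 0 := (shiftFunctor C (1:ℤ)).map_injective <| by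
      rw [Functor.map_comp, hτ, Category.assoc, ← hρ, ← Category.assoc,
        ← Functor.map_preimage (shiftFunctor C 1) (τ ≫ a), ← Functor.map_comp, hψ D₁ hD₁,
        Functor.map_zero]
    rw [hρ, hβ Y hY ρ₀ hβρ, Functor.map_zero, comp_zero]
  obtain ⟨ξ, rfl⟩ : ∃ ξ : Z ⟶ Y⟦(1:ℤ)⟧, ψ = w ≫ ξ := Triangle.yoneda_exact₁ _ hTW ψ haψ
  have hde : d ≫ e = 0 := comp_distTriang_mor_zero₁₂ _ hTU
  have hden : d ≫ e ≫ n = 0 := by rw [← Category.assoc, hde, zero_comp]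
  obtain ⟨l, hl⟩ : ∃ l : D₀ ⟶ W, d = l ≫ w := Triangle.coyoneda_exact₂ _ hTW d hden
  refine fiber_comp_eq_zero hTU hTN hTW ?_ fun χ₁ => hβ Y hY _ ?_
  · rw [hl, Category.assoc, hψ D₀ hD₀]
  · rw [← Category.assoc, hβm, zero_comp]

lemma mem_extClass_muInv_of_distTriang {𝒩 : Set C} (hpair : IsTorsionPair 𝒳 𝒴)
    (h𝒳 : IsSubcat 𝒳) (h𝒟𝒴 : homZero 𝒟 𝒴) (hRA : ∀ A : C, HasRightApprox 𝒟 A)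
    (hDrig : homZero 𝒟 (shiftSet 𝒟 (1:ℤ))) (h𝒩 : 𝒩 ⊆ leftPerpShift (shiftSet 𝒟 (1:ℤ)))
    (hD₀ : D₀ ∈ 𝒟) (hU : ∀ D ∈ 𝒟, Subsingleton (D ⟶ U))
    (hTU : Triangle.mk d e r ∈ distTriang C) (hUmem : U ∈ extClass (muInv 𝒳 𝒟) 𝒩) :
    Z ∈ extClass (muInv 𝒳 𝒟) 𝒩 := by
  obtain ⟨M, N, m, n, s, hM, hN, hTN⟩ := hUmem
  obtain ⟨W, w, a, hTW⟩ := distinguished_cocone_triangle₁ (e ≫ n)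
  exact ⟨W, N, w, e ≫ n, a, ⟨fiber_mem_extClass hpair h𝒳 h𝒟𝒴 hRA hD₀ hU hTU hTN hTW hM.1,
    fiber_mem_leftPerpShift hDrig hD₀ hTU hTN hTW hM.2 (h𝒩 hN)⟩, hN, hTW⟩

end Gluing

section MutatedPair

variable {𝒳 𝒴 𝒟 : Set C}

lemma homZero_of_subset_extClass {𝒜₁ ℬ₁ 𝒜₂ ℬ₂ 𝒮 𝒯 : Set C} (h𝒮 : 𝒮 ⊆ extClass 𝒜₁ ℬ₁)
    (h𝒯 : 𝒯 ⊆ extClass 𝒜₂ ℬ₂) (h₁ : homZero 𝒜₁ 𝒯) (h₂ : homZero ℬ₁ ℬ₂)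
    (h₃ : homZero 𝒮 𝒜₂) : homZero 𝒮 𝒯 := by
  intro P Q hP hQ f
  obtain ⟨A₁, B₁, a₁, b₁, _, hA₁, hB₁, hT₁⟩ := h𝒮 hP
  obtain ⟨A₂, B₂, a₂, b₂, _, hA₂, hB₂, hT₂⟩ := h𝒯 hQ
  obtain ⟨f₁, rfl⟩ : ∃ f₁ : B₁ ⟶ Q, f = b₁ ≫ f₁ := Triangle.yoneda_exact₂ _ hT₁ f (h₁ hA₁ hQ _)
  obtain ⟨f₂, rfl⟩ : ∃ f₂ : B₁ ⟶ A₂, f₁ = f₂ ≫ a₂ :=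
    Triangle.coyoneda_exact₂ _ hT₂ f₁ (h₂ hB₁ hB₂ _)
  rw [← Category.assoc, h₃ hP hA₂ (b₁ ≫ f₂), zero_comp]

lemma homZero_muInv_leftPerpShift : homZero (muInv 𝒳 𝒟) (shiftSet 𝒟 (1:ℤ)) :=
  homZero_leftPerpShift.mono (fun _ h => h.2) subset_rfl

lemma homZero_muInv (h𝒳𝒴 : homZero 𝒳 𝒴) (hperp : leftPerpShift 𝒟 = shiftRightPerp 𝒟) :
    homZero (muInv 𝒳 𝒟) (muInv 𝒴 (shiftSet 𝒟 (1:ℤ))) :=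
  homZero_of_subset_extClass (fun _ h => h.1) (fun _ h => h.1)
    (homZero_of_subsingleton fun _ hD _ hN => (mem_leftPerpShift_shiftSet_iff hperp).1 hN.2 _ hD)
    (h𝒳𝒴.shiftSet 1) homZero_muInv_leftPerpShift

lemma homZero_muInv_shiftSet (hrigid : homZero 𝒳 (shiftSet 𝒳 (1:ℤ)))
    (hperp : leftPerpShift 𝒟 = shiftRightPerp 𝒟) :
    homZero (muInv 𝒳 𝒟) (shiftSet (muInv 𝒳 𝒟) (1:ℤ)) :=
  homZero_of_subset_extClass (fun _ h => h.1)
    ((shiftSet_mono (fun _ h => h.1) 1).trans shiftSet_extClass_subset)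
    (homZero_of_subsingleton fun _ hD => (forall_mem_shiftSet_iff
      (fun _ _ e h => ((Iso.refl _).homCongr e).subsingleton_congr.1 h) 1).2
        fun _ hM => subsingleton_hom_shift_of_mem_leftPerpShift hperp hM.2 hD)
    (hrigid.shiftSet 1) homZero_muInv_leftPerpShift

lemma mem_extClass_muInv (hpair : IsTorsionPair 𝒳 𝒴) (h𝒳 : IsSubcat 𝒳) (h𝒴 : IsSubcat 𝒴)
    (hrigid : homZero 𝒳 (shiftSet 𝒳 (1:ℤ))) (hRF : RF 𝒟) (h𝒟𝒳 : 𝒟 ⊆ 𝒳)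
    (h𝒳𝒟 : 𝒳 ⊆ leftPerpShift 𝒟) (Z : C) :
    Z ∈ extClass (muInv 𝒳 𝒟) (muInv 𝒴 (shiftSet 𝒟 (1:ℤ))) := by
  obtain ⟨hLA, hRA, hDrig, hperp⟩ := hRF
  obtain ⟨D₀, hD₀, d, hd⟩ := hRA Z
  obtain ⟨U, e, r, hTU⟩ := distinguished_cocone_triangle d
  have hU : ∀ D ∈ 𝒟, Subsingleton (D ⟶ U) := fun _ hD =>
    subsingleton_hom_cone_of_rightApprox hDrig hD₀ hd hTU hD
  exact mem_extClass_muInv_of_distTriang hpair h𝒳 (hpair.1.mono h𝒟𝒳 subset_rfl) hRA hDrig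
    (fun _ h => h.2) hD₀ hU hTU
    (mem_extClass_muInv_of_subsingleton hpair h𝒴 hrigid hLA hDrig hperp h𝒳𝒟 hU)

end MutatedPair

/-- the `𝒟`-mutation of a rigid torsion pair is again a rigid
torsion pair. -/
theorem stmt12 (k : Type*) [Field k] [Linear k C]
    [∀ A B : C, Module.Finite k (A ⟶ B)] [IsIdempotentComplete C]
    (𝒳 𝒴 𝒟 : Set C) (hX : IsSubcat 𝒳) (hY : IsSubcat 𝒴) (hD : IsSubcat 𝒟)
    (hpair : IsTorsionPair 𝒳 𝒴)
    (hrigid : homZero 𝒳 (shiftSet 𝒳 (1:ℤ)))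
    (hRF : RF 𝒟)
    (hDX : 𝒟 ⊆ 𝒳) (hXD : 𝒳 ⊆ shiftRightPerp 𝒟) :
    IsTorsionPair (muInv 𝒳 𝒟) (muInv 𝒴 (shiftSet 𝒟 (1:ℤ))) ∧
    homZero (muInv 𝒳 𝒟) (shiftSet (muInv 𝒳 𝒟) (1:ℤ)) := by
  have hperp : leftPerpShift 𝒟 = shiftRightPerp 𝒟 := hRF.2.2.2
  have h𝒳𝒟 : 𝒳 ⊆ leftPerpShift 𝒟 := hperp ▸ hXD
  exact ⟨⟨homZero_muInv hpair.1 hperp, mem_extClass_muInv hpair hX hY hrigid hRF hDX h𝒳𝒟⟩,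
    homZero_muInv_shiftSet hrigid hperp⟩
end
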